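/- ∑_{n≥0} (16^n / ((2n+1)³ C(2n,n)²)) = −πK + (7/2)ζ(3). -/

import Mathlib

noncomputable def catalanK : ℝ := ∑' n : ℕ, (-1 : ℝ) ^ n / (2 * n + 1) ^ 2

open Real MeasureTheory intervalIntegral Set Filter

noncomputable def W (n : ℕ) : ℝ := ∫ x in (0:ℝ)..(π/2), sin x ^ (2*n+1)
noncomputable def V (n : ℕ) : ℝ := ∫ x in (0:ℝ)..(π/2), sin x ^ (2*n)

lemma W_zero : W 0 = 1 := by
  simp [W, integral_sin]

lemma V_zero : V 0 = π/2 := by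
  simp [V]

lemma W_succ (n : ℕ) : W (n+1) = (2*n+2)/(2*n+3) * W n := by
  have h := integral_sin_pow (a := 0) (b := π/2) (2*n+1)
  rw [show 2*n+1+2 = 2*(n+1)+1 by ring] at h
  have h2 : W (n+1) = (sin 0 ^ (2*n+1+1) * cos 0 - sin (π/2) ^ (2*n+1+1) * cos (π/2)) / (↑(2*n+1)+2)
      + (↑(2*n+1)+1)/(↑(2*n+1)+2) * W n := h
  rw [h2, Real.cos_pi_div_two, Real.sin_zero]
  push_cast
  rw [zero_pow (by omega)]
  ring

lemma V_succ (n : ℕ) : V (n+1) = (2*n+1)/(2*n+2) * V n := by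
  have h := integral_sin_pow (a := 0) (b := π/2) (2*n)
  rw [show 2*n+2 = 2*(n+1) by ring] at h
  have h2 : V (n+1) = (sin 0 ^ (2*n+1) * cos 0 - sin (π/2) ^ (2*n+1) * cos (π/2)) / (↑(2*n)+2)
      + (↑(2*n)+1)/(↑(2*n)+2) * V n := h
  rw [h2, Real.cos_pi_div_two, Real.sin_zero]
  push_cast
  rw [zero_pow (by omega)]
  ring

lemma W_pos (n : ℕ) : 0 < W n := by
  induction n with
  | zero => rw [W_zero]; norm_num
  | succ n ih =>
    rw [W_succ]
    have h1 : (0:ℝ) < 2*n+2 := by positivity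
    have h2 : (0:ℝ) < 2*n+3 := by positivity
    positivity

lemma V_pos (n : ℕ) : 0 < V n := by
  induction n with
  | zero => rw [V_zero]; positivity
  | succ n ih =>
    rw [V_succ]
    have h1 : (0:ℝ) < 2*n+1 := by positivity
    positivity

lemma WV (n : ℕ) : (2*n+1) * (W n * V n) = π/2 := by
  induction n with
  | zero => rw [W_zero, V_zero]; push_cast; ring
  | succ n ih =>
    rw [W_succ, V_succ]
    push_cast
    push_cast at ih
    have h3 : (2*(n:ℝ)+3) ≠ 0 := by positivity
    have h2 : (2*(n:ℝ)+2) ≠ 0 := by positivity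
    have h1 : (2*(n:ℝ)+1) ≠ 0 := by positivity
    field_simp
    linear_combination (2*(2*(n:ℝ)+3)) * ih

lemma W_le_V (n : ℕ) : W n ≤ V n := by
  rw [W, V]
  apply intervalIntegral.integral_mono_on (by positivity)
  · exact (Real.continuous_sin.pow _).intervalIntegrable _ _
  · exact (Real.continuous_sin.pow _).intervalIntegrable _ _
  · intro x hx
    have h0 : 0 ≤ sin x := Real.sin_nonneg_of_nonneg_of_le_pi hx.1
      (le_trans hx.2 (by linarith [Real.pi_pos]))
    have h1 : sin x ≤ 1 := Real.sin_le_one x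
    calc sin x ^ (2*n+1) = sin x ^ (2*n) * sin x := by ring
    _ ≤ sin x ^ (2*n) * 1 := by
        apply mul_le_mul_of_nonneg_left h1 (by positivity)
    _ = sin x ^ (2*n) := by ring

lemma W_sq_le (n : ℕ) : (2*n+1) * W n ^ 2 ≤ π/2 := by
  calc (2*(n:ℝ)+1) * W n ^ 2 ≤ (2*n+1) * (W n * V n) := by
        have h1 := W_le_V n
        have h2 := W_pos n
        have h3 : (0:ℝ) < 2*n+1 := by positivity
        nlinarith [mul_le_mul_of_nonneg_left h1 h2.le, mul_pos h3 h2]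
  _ = π/2 := WV n

lemma W_formula (n : ℕ) : W n = 4^n / ((2*n+1) * (Nat.centralBinom n : ℝ)) := by
  induction n with
  | zero => simp [W_zero, Nat.centralBinom]
  | succ n ih =>
    have hC := Nat.succ_mul_centralBinom_succ n
    have hC' : ((n:ℝ)+1) * (Nat.centralBinom (n+1) : ℝ) = 2 * (2*n+1) * Nat.centralBinom n := by
      exact_mod_cast congrArg (Nat.cast : ℕ → ℝ) hC
    have hCpos : (0:ℝ) < Nat.centralBinom n := by
      exact_mod_cast (Nat.centralBinom_pos n)
    have hCpos' : (0:ℝ) < Nat.centralBinom (n+1) := by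
      exact_mod_cast (Nat.centralBinom_pos (n+1))
    rw [W_succ, ih]
    push_cast
    have h1 : (2*(n:ℝ)+1) ≠ 0 := by positivity
    have h3 : (2*(n:ℝ)+3) ≠ 0 := by positivity
    have hn1 : ((n:ℝ)+1) ≠ 0 := by positivity
    rw [div_mul_div_comm, div_eq_div_iff (by positivity) (by positivity)]
    linear_combination (2*(2*(n:ℝ)+3)*4^n) * hC'

lemma W_le_one (n : ℕ) : W n ≤ 1 := by
  induction n with
  | zero => rw [W_zero]
  | succ n ih =>
    rw [W_succ]
    have h2 : (0:ℝ) < 2*n+3 := by positivity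
    have := W_pos n
    calc (2*(n:ℝ)+2)/(2*n+3) * W n ≤ 1 * W n := by
          apply mul_le_mul_of_nonneg_right _ this.le
          rw [div_le_one h2]; linarith
    _ ≤ 1 := by linarith

lemma summable_geom_lin {r : ℝ} (h0 : 0 ≤ r) (h1 : r < 1) :
    Summable (fun n : ℕ => (2*(n:ℝ)+1) * r^n) := by
  have h1' : ‖r‖ < 1 := by rwa [Real.norm_eq_abs, abs_of_nonneg h0]
  have hs1 : Summable (fun n : ℕ => (n:ℝ)^1 * r^n) :=
    summable_pow_mul_geometric_of_norm_lt_one 1 h1'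
  have hs2 : Summable (fun n : ℕ => r^n) := summable_geometric_of_lt_one h0 h1
  have := (hs1.mul_left 2).add hs2
  refine this.congr fun n => ?_
  push_cast; ring

lemma abs_sin_le_sin {u b : ℝ} (hb : b ≤ π/2) (hb0 : 0 ≤ b) (h : |u| ≤ b) : |sin u| ≤ sin b := by
  have habs : |u| ∈ Icc (-(π/2)) (π/2) := ⟨by linarith [abs_nonneg u], by linarith⟩
  have hbmem : b ∈ Icc (-(π/2)) (π/2) := ⟨by linarith, hb⟩
  have h1 : sin |u| ≤ sin b := Real.strictMonoOn_sin.monotoneOn habs hbmem h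
  rcases le_or_gt 0 u with hu | hu
  · rw [abs_of_nonneg hu] at h1
    rw [abs_of_nonneg (Real.sin_nonneg_of_nonneg_of_le_pi hu (by
      rw [abs_of_nonneg hu] at h; linarith [Real.pi_pos]))]
    exact h1
  · rw [abs_of_neg hu] at h1
    have : sin (-u) = -sin u := Real.sin_neg u
    rw [this] at h1
    have hsu : sin u ≤ 0 := by
      have := Real.sin_nonneg_of_nonneg_of_le_pi (le_of_lt (neg_pos.2 hu))
        (by rw [abs_of_neg hu] at h; linarith [Real.pi_pos])
      rw [Real.sin_neg] at this; linarith
    rw [abs_of_nonpos hsu]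
    linarith

lemma abs_sin_lt_one {y : ℝ} (h : |y| < π/2) : |sin y| < 1 := by
  have h1 : |sin y| ≤ sin |y| := abs_sin_le_sin h.le (abs_nonneg y) le_rfl
  have h2 : sin |y| < sin (π/2) := by
    apply Real.strictMonoOn_sin ⟨by linarith [abs_nonneg y], h.le⟩
      ⟨by linarith [Real.pi_pos], le_rfl⟩ h
  rw [Real.sin_pi_div_two] at h2
  linarith

noncomputable def GG (x : ℝ) : ℝ := ∑' n : ℕ, W n * sin x ^ (2*n+1)
noncomputable def hh (x : ℝ) : ℝ := ∑' n : ℕ, W n * sin x ^ (2*n+1) / (2*n+1)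

lemma term_hasDerivAt_G (n : ℕ) (y : ℝ) :
    HasDerivAt (fun x => W n * sin x ^ (2*n+1))
      (((2*(n:ℝ)+1) * W n * sin y ^ (2*n)) * cos y) y := by
  have h := ((Real.hasDerivAt_sin y).pow (2*n+1)).const_mul (W n)
  refine h.congr_deriv (Eq.symm ?_)
  simp only [Nat.add_sub_cancel]
  push_cast
  ring

lemma term_hasDerivAt_h (n : ℕ) (y : ℝ) :
    HasDerivAt (fun x => W n * sin x ^ (2*n+1) / (2*n+1))
      ((W n * sin y ^ (2*n)) * cos y) y := by
  have h := (((Real.hasDerivAt_sin y).pow (2*n+1)).const_mul (W n)).div_const ((2*(n:ℝ)+1))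
  refine h.congr_deriv (Eq.symm ?_)
  simp only [Nat.add_sub_cancel]
  have h1 : (2*(n:ℝ)+1) ≠ 0 := by positivity
  push_cast
  field_simp

lemma hasDerivAt_GG {y : ℝ} (hy : |y| < π/2) :
    HasDerivAt GG (∑' n : ℕ, ((2*(n:ℝ)+1) * W n * sin y ^ (2*n)) * cos y) y := by
  set b : ℝ := (|y| + π/2)/2 with hb
  have hb1 : |y| < b := by rw [hb]; linarith
  have hb2 : b < π/2 := by rw [hb]; linarith
  have hb0 : 0 ≤ b := by positivity
  have hr0 : 0 ≤ sin b ^ 2 := sq_nonneg _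
  have hr1 : sin b ^ 2 < 1 := by
    have : |sin b| < 1 := abs_sin_lt_one (by rwa [abs_of_nonneg hb0])
    rwa [← sq_abs, sq_lt_one_iff_abs_lt_one, abs_abs]
  have hbpos : 0 < b := by rw [hb]; have := Real.pi_pos; positivity
  refine hasDerivAt_tsum_of_isPreconnected (summable_geom_lin hr0 hr1)
    (isOpen_Ioo (a := -b) (b := b)) (isPreconnected_Ioo)
    (fun n x _ => term_hasDerivAt_G n x) (fun n x hx => ?_) (y₀ := 0)
    (mem_Ioo.2 ⟨by linarith, hbpos⟩) ?_ (mem_Ioo.2 (abs_lt.1 hb1))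
  · 
    have hsx : |sin x| ≤ sin b := abs_sin_le_sin hb2.le hb0 (abs_le.2 ⟨hx.1.le, hx.2.le⟩)
    have h1 : |sin x ^ (2*n)| ≤ (sin b ^2) ^ n := by
      rw [abs_pow, pow_mul]
      apply pow_le_pow_left₀ (sq_nonneg _) _ n
      rw [sq_abs, ← sq_abs (sin x)]
      apply pow_le_pow_left₀ (abs_nonneg _) hsx
    rw [Real.norm_eq_abs, abs_mul, abs_mul, abs_mul]
    have hWn : |W n| ≤ 1 := by
      rw [abs_of_pos (W_pos n)]; exact W_le_one n
    have hcos : |cos x| ≤ 1 := abs_cos_le_one x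
    have h2 : |2*(n:ℝ)+1| = 2*n+1 := abs_of_pos (by positivity)
    calc |2*(n:ℝ)+1| * |W n| * |sin x ^ (2*n)| * |cos x|
        ≤ (2*(n:ℝ)+1) * 1 * ((sin b^2)^n) * 1 := by
          rw [h2]
          apply mul_le_mul (mul_le_mul (mul_le_mul le_rfl hWn (abs_nonneg _) (by positivity))
            h1 (abs_nonneg _) (by positivity)) hcos (abs_nonneg _) (by positivity)
    _ = (2*(n:ℝ)+1) * (sin b^2)^n := by ring
  · refine summable_zero.congr fun n => ?_
    rw [Real.sin_zero, zero_pow (by omega : 2*n+1 ≠ 0), mul_zero]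

lemma summable_P {s : ℝ} (hs : |s| < 1) :
    Summable (fun n : ℕ => (2*(n:ℝ)+1) * W n * s^(2*n)) := by
  have hr0 : 0 ≤ s^2 := sq_nonneg s
  have hr1 : s^2 < 1 := by rwa [← sq_abs, sq_lt_one_iff_abs_lt_one, abs_abs]
  apply Summable.of_nonneg_of_le _ _ (summable_geom_lin hr0 hr1)
  · intro n
    have h1 : (0:ℝ) ≤ s^(2*n) := by rw [pow_mul]; positivity
    have := (W_pos n).le
    positivity
  · intro n
    rw [pow_mul]
    calc (2*(n:ℝ)+1) * W n * (s^2)^n ≤ (2*(n:ℝ)+1) * 1 * (s^2)^n := by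
          apply mul_le_mul_of_nonneg_right _ (by positivity)
          apply mul_le_mul_of_nonneg_left (W_le_one n) (by positivity)
    _ = (2*(n:ℝ)+1) * (s^2)^n := by ring

lemma hasDerivAt_hh {y : ℝ} (hy : |y| < π/2) :
    HasDerivAt hh (∑' n : ℕ, (W n * sin y ^ (2*n)) * cos y) y := by
  set b : ℝ := (|y| + π/2)/2 with hb
  have hb1 : |y| < b := by rw [hb]; linarith
  have hb2 : b < π/2 := by rw [hb]; linarith
  have hb0 : 0 ≤ b := by positivity
  have hr0 : 0 ≤ sin b ^ 2 := sq_nonneg _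
  have hr1 : sin b ^ 2 < 1 := by
    have : |sin b| < 1 := abs_sin_lt_one (by rwa [abs_of_nonneg hb0])
    rwa [← sq_abs, sq_lt_one_iff_abs_lt_one, abs_abs]
  have hbpos : 0 < b := by rw [hb]; have := Real.pi_pos; positivity
  have hsumgeo : Summable (fun n : ℕ => (sin b^2)^n) := summable_geometric_of_lt_one hr0 hr1
  refine hasDerivAt_tsum_of_isPreconnected hsumgeo
    (isOpen_Ioo (a := -b) (b := b)) (isPreconnected_Ioo)
    (fun n x _ => term_hasDerivAt_h n x) (fun n x hx => ?_) (y₀ := 0)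
    (mem_Ioo.2 ⟨by linarith, hbpos⟩) ?_ (mem_Ioo.2 (abs_lt.1 hb1))
  · have hsx : |sin x| ≤ sin b := abs_sin_le_sin hb2.le hb0 (abs_le.2 ⟨hx.1.le, hx.2.le⟩)
    have h1 : |sin x ^ (2*n)| ≤ (sin b ^2) ^ n := by
      rw [abs_pow, pow_mul]
      apply pow_le_pow_left₀ (sq_nonneg _) _ n
      rw [sq_abs, ← sq_abs (sin x)]
      apply pow_le_pow_left₀ (abs_nonneg _) hsx
    rw [Real.norm_eq_abs, abs_mul, abs_mul]
    have hWn : |W n| ≤ 1 := by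
      rw [abs_of_pos (W_pos n)]; exact W_le_one n
    have hcos : |cos x| ≤ 1 := abs_cos_le_one x
    calc |W n| * |sin x ^ (2*n)| * |cos x|
        ≤ 1 * ((sin b^2)^n) * 1 := by
          apply mul_le_mul (mul_le_mul hWn h1 (abs_nonneg _) (by norm_num))
            hcos (abs_nonneg _) (by positivity)
    _ = (sin b^2)^n := by ring
  · refine summable_zero.congr fun n => ?_
    rw [Real.sin_zero, zero_pow (by omega : 2*n+1 ≠ 0), mul_zero, zero_div]

lemma key_sum {s : ℝ} (hs : |s| < 1) :
    (∑' n : ℕ, (2*(n:ℝ)+1) * W n * s^(2*n)) * (1 - s^2)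
      - (∑' n : ℕ, W n * s^(2*n+1)) * s = 1 := by
  have hP := summable_P hs
  have hQ1 : Summable (fun n : ℕ => ((2*(n:ℝ)+1) * W n * s^(2*n)) * s^2) := hP.mul_right _
  have hQ2 : Summable (fun n : ℕ => W n * s^(2*n) * s^2) := by
    apply Summable.of_nonneg_of_le _ _ hQ1
    · intro n
      have h1 : (0:ℝ) ≤ s^(2*n) := by rw [pow_mul]; positivity
      have := (W_pos n).le
      positivity
    · intro n
      have h1 : (0:ℝ) ≤ s^(2*n) := by rw [pow_mul]; positivity
      have h2 := (W_pos n).le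
      have h3 : (1:ℝ) ≤ 2*n+1 := by linarith [Nat.cast_nonneg (α := ℝ) n]
      have t0 : (0:ℝ) ≤ W n * s^(2*n) * s^2 := by positivity
      nlinarith [mul_le_mul_of_nonneg_right h3 t0]
  have e1 : (∑' n : ℕ, W n * s^(2*n+1)) * s = ∑' n : ℕ, W n * s^(2*n) * s^2 := by
    rw [← tsum_mul_right]
    congr 1; funext n; ring
  have e2 : (∑' n : ℕ, (2*(n:ℝ)+1) * W n * s^(2*n)) * s^2
      = ∑' n : ℕ, ((2*(n:ℝ)+1) * W n * s^(2*n)) * s^2 := (tsum_mul_right).symm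
  have e3 : ∑' n : ℕ, (((2*(n:ℝ)+1) * W n * s^(2*n)) * s^2 + W n * s^(2*n) * s^2)
      = ∑' n : ℕ, (2*((n:ℝ)+1)+1) * W (n+1) * s^(2*(n+1)) := by
    congr 1; funext n
    rw [W_succ]
    have h3 : (2*(n:ℝ)+3) ≠ 0 := by positivity
    have : s^(2*(n+1)) = s^(2*n) * s^2 := by ring
    rw [this]
    field_simp
    ring
  have e4 : ∑' n : ℕ, (2*(n:ℝ)+1) * W n * s^(2*n)
      = (2*(0:ℝ)+1) * W 0 * s^(2*0) + ∑' n : ℕ, (2*((n:ℝ)+1)+1) * W (n+1) * s^(2*(n+1)) := by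
    rw [hP.tsum_eq_zero_add]
    push_cast
    ring_nf
  rw [mul_sub, e1, e2, mul_one, sub_sub, ← hQ1.tsum_add hQ2, e3, e4, W_zero]
  norm_num

open scoped Topology

lemma GG_zero : GG 0 = 0 := by
  unfold GG
  rw [Real.sin_zero]
  convert tsum_zero with n
  rw [zero_pow (by omega : 2*n+1 ≠ 0), mul_zero]

lemma hasDerivAt_theta {y : ℝ} (hy : |y| < π/2) :
    HasDerivAt (fun x => cos x * GG x - x) 0 y := by
  have hG := hasDerivAt_GG hy
  have h := ((Real.hasDerivAt_cos y).mul hG).sub (hasDerivAt_id y)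
  refine h.congr_deriv (Eq.symm ?_)
  have hs : |sin y| < 1 := abs_sin_lt_one hy
  have key := key_sum hs
  have e1 : ∑' n : ℕ, ((2*(n:ℝ)+1) * W n * sin y ^ (2*n)) * cos y
      = (∑' n : ℕ, (2*(n:ℝ)+1) * W n * sin y ^ (2*n)) * cos y := tsum_mul_right
  rw [e1]
  have hGy : GG y = ∑' n : ℕ, W n * sin y ^ (2*n+1) := rfl
  have hc : cos y ^ 2 = 1 - sin y ^ 2 := Real.cos_sq' y
  rw [hGy] at *
  linear_combination -key - (∑' n : ℕ, (2*(n:ℝ)+1) * W n * sin y ^ (2*n)) * hc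

lemma cos_mul_GG {u : ℝ} (h0 : 0 ≤ u) (h1 : u < π/2) : cos u * GG u = u := by
  have key := constant_of_has_deriv_right_zero (f := fun x => cos x * GG x - x) (a := 0) (b := u)
    (fun x hx => by
      have hx' : |x| < π/2 := by
        rw [abs_lt]; constructor <;> [linarith [hx.1]; linarith [hx.2]]
      exact (hasDerivAt_theta hx').continuousAt.continuousWithinAt)
    (fun x hx => by
      have hx' : |x| < π/2 := by
        rw [abs_lt]; constructor <;> [linarith [hx.1]; linarith [hx.2]]
      exact (hasDerivAt_theta hx').hasDerivWithinAt)
    u (by exact ⟨h0, le_rfl⟩)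
  simp only [Real.cos_zero, GG_zero, mul_zero, one_mul, sub_zero] at key
  linarith [key]

noncomputable def kf (x : ℝ) : ℝ := if x = 0 then 1 else x / sin x

lemma hh_deriv_eq {y : ℝ} (h0 : 0 ≤ y) (h1 : y < π/2) :
    ∑' n : ℕ, (W n * sin y ^ (2*n)) * cos y = kf y := by
  rcases eq_or_lt_of_le h0 with h | h
  · subst h
    rw [tsum_eq_single 0 (fun n hn => by
      rw [Real.sin_zero, zero_pow (by omega : 2*n ≠ 0), mul_zero, zero_mul])]
    simp [kf, W_zero]
  · have hs : 0 < sin y := Real.sin_pos_of_pos_of_lt_pi h (by linarith [Real.pi_pos])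
    have e1 : ∀ n : ℕ, (W n * sin y ^ (2*n)) * cos y
        = (W n * sin y ^ (2*n+1)) * (cos y / sin y) := by
      intro n
      rw [pow_succ]
      field_simp
    rw [tsum_congr e1, tsum_mul_right]
    have : (∑' n : ℕ, W n * sin y ^ (2*n+1)) = GG y := rfl
    rw [this, kf, if_neg (ne_of_gt h)]
    have hc := cos_mul_GG h0 h1
    field_simp
    linear_combination hc

lemma kf_zero : kf 0 = 1 := by simp [kf]

lemma kf_contAt {x : ℝ} (hx0 : 0 ≤ x) (hx : x < π) : ContinuousAt kf x := by
  rcases eq_or_lt_of_le hx0 with h | h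
  · subst h
    have hsin : Tendsto (fun t => sin t / t) (𝓝[≠] (0:ℝ)) (𝓝 1) := by
      have hd : HasDerivAt sin 1 0 := by
        simpa using Real.hasDerivAt_sin 0
      have := hasDerivAt_iff_tendsto_slope.1 hd
      refine this.congr fun t => ?_
      rw [slope_def_field]
      simp
    have hinv : Tendsto (fun t => t / sin t) (𝓝[≠] (0:ℝ)) (𝓝 1) := by
      have := hsin.inv₀ one_ne_zero
      rw [inv_one] at this
      refine this.congr fun t => ?_
      rw [inv_div]
    have hkf : Tendsto kf (𝓝[≠] (0:ℝ)) (𝓝 1) := by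
      refine hinv.congr' ?_
      filter_upwards [self_mem_nhdsWithin] with t ht
      rw [kf, if_neg (show t ≠ 0 from ht)]
    have : Tendsto kf (𝓝 (0:ℝ)) (𝓝 1) := by
      rw [← nhdsNE_sup_pure]
      rw [Filter.tendsto_sup]
      refine ⟨hkf, ?_⟩
      have := tendsto_pure_nhds kf 0
      rwa [kf_zero] at this
    rw [ContinuousAt, kf_zero]
    exact this
  · have hs : sin x ≠ 0 := (Real.sin_pos_of_pos_of_lt_pi h hx).ne'
    have hcont : ContinuousAt (fun t => t / sin t) x :=
      continuousAt_id.div Real.continuous_sin.continuousAt hs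
    refine hcont.congr ?_
    filter_upwards [eventually_ne_nhds h.ne'] with t ht
    rw [kf, if_neg ht]

noncomputable def FF (u : ℝ) : ℝ := ∫ t in (0:ℝ)..u, kf t

lemma kf_meas : Measurable kf := by
  unfold kf
  exact Measurable.ite (measurableSet_eq) measurable_const
    (measurable_id.div Real.measurable_sin)

lemma kf_contOn : ContinuousOn kf (Icc 0 (π/2)) := fun x hx =>
  (kf_contAt hx.1 (lt_of_le_of_lt hx.2 (by linarith [Real.pi_pos]))).continuousWithinAt

lemma kf_intble {u : ℝ} (h0 : 0 ≤ u) (h2 : u ≤ π/2) : IntervalIntegrable kf volume 0 u := by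
  apply ContinuousOn.intervalIntegrable
  apply kf_contOn.mono
  rw [uIcc_of_le h0]
  exact Icc_subset_Icc le_rfl h2

lemma hasDerivAt_FF {u : ℝ} (h0 : 0 ≤ u) (h2 : u ≤ π/2) : HasDerivAt FF (kf u) u := by
  apply intervalIntegral.integral_hasDerivAt_right (kf_intble h0 h2)
    ⟨Set.univ, Filter.univ_mem, kf_meas.aestronglyMeasurable⟩
  exact kf_contAt h0 (lt_of_le_of_lt h2 (by linarith [Real.pi_pos]))

lemma hh_zero : hh 0 = 0 := by
  unfold hh
  rw [Real.sin_zero]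
  convert tsum_zero with n
  rw [zero_pow (by omega : 2*n+1 ≠ 0), mul_zero, zero_div]

lemma hh_eq_FF {u : ℝ} (h0 : 0 ≤ u) (h1 : u < π/2) : hh u = FF u := by
  have key := constant_of_has_deriv_right_zero (f := fun x => hh x - FF x) (a := 0) (b := u)
    (fun x hx => by
      have hx' : |x| < π/2 := by
        rw [abs_lt]; constructor <;> [linarith [hx.1]; linarith [hx.2]]
      exact ((hasDerivAt_hh hx').sub
        (hasDerivAt_FF hx.1 (by linarith [hx.2]))).continuousAt.continuousWithinAt)
    (fun x hx => by
      have hx' : |x| < π/2 := by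
        rw [abs_lt]; constructor <;> [linarith [hx.1]; linarith [hx.2]]
      have hd := (hasDerivAt_hh hx').sub (hasDerivAt_FF hx.1 (by linarith [hx.2]))
      rw [hh_deriv_eq hx.1 (by linarith [hx.2]), sub_self] at hd
      exact hd.hasDerivWithinAt)
    u ⟨h0, le_rfl⟩
  have hFF0 : FF 0 = 0 := intervalIntegral.integral_same
  rw [hh_zero, hFF0, sub_zero] at key
  linarith [key]

lemma summable_inv_sq : Summable (fun n : ℕ => 1/((n:ℝ)+1)^2) := by
  have h : Summable (fun n : ℕ => 1/((n:ℝ))^2) := Real.summable_one_div_nat_pow.mpr (by norm_num)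
  have := (summable_nat_add_iff 1).2 h
  refine this.congr fun n => ?_
  push_cast
  ring

lemma a_le (n : ℕ) : W n^2/(2*(n:ℝ)+1) ≤ (π/2) * (1/((n:ℝ)+1)^2) := by
  have h1 := W_sq_le n
  have h2 : (0:ℝ) < 2*n+1 := by positivity
  have h3 : ((n:ℝ)+1)^2 ≤ (2*n+1)^2 := by
    apply pow_le_pow_left₀ (by positivity)
    linarith [Nat.cast_nonneg (α := ℝ) n]
  rw [div_le_iff₀ h2] at *
  have h4 : (0:ℝ) < ((n:ℝ)+1)^2 := by positivity
  rw [mul_one_div, div_mul_eq_mul_div, le_div_iff₀ h4]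
  nlinarith [Real.pi_pos, sq_nonneg (W n)]

lemma summable_a : Summable (fun n : ℕ => W n^2/(2*(n:ℝ)+1)) := by
  apply Summable.of_nonneg_of_le _ a_le (summable_inv_sq.mul_left (π/2))
  intro n
  have := W_pos n
  positivity

lemma integral_term (n : ℕ) : ∫ x in (0:ℝ)..(π/2), W n * sin x ^ (2*n+1) / (2*(n:ℝ)+1)
    = W n^2/(2*(n:ℝ)+1) := by
  have : ∀ x : ℝ, W n * sin x ^ (2*n+1) / (2*(n:ℝ)+1)
      = (W n / (2*(n:ℝ)+1)) * sin x ^ (2*n+1) := fun x => by ring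
  rw [intervalIntegral.integral_congr (fun x _ => this x), intervalIntegral.integral_const_mul]
  rw [show (∫ x in (0:ℝ)..(π/2), sin x ^ (2*n+1)) = W n from rfl]
  ring

lemma hasSum_S : HasSum (fun n : ℕ => W n^2/(2*(n:ℝ)+1)) (∫ x in Ioc (0:ℝ) (π/2), hh x) := by
  have hcont : ∀ n : ℕ, Continuous (fun x : ℝ => W n * sin x ^ (2*n+1) / (2*(n:ℝ)+1)) :=
    fun n => (continuous_const.mul (Real.continuous_sin.pow _)).div_const _
  have hint : ∀ n : ℕ, IntegrableOn (fun x : ℝ => W n * sin x ^ (2*n+1) / (2*(n:ℝ)+1))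
      (Ioc 0 (π/2)) volume := fun n => (hcont n).integrableOn_Ioc
  have hnorm : ∀ n : ℕ, (∫ x in Ioc (0:ℝ) (π/2), ‖W n * sin x ^ (2*n+1) / (2*(n:ℝ)+1)‖)
      = W n^2/(2*(n:ℝ)+1) := by
    intro n
    rw [setIntegral_congr_fun measurableSet_Ioc (g := fun x => W n * sin x ^ (2*n+1) / (2*(n:ℝ)+1))]
    · rw [← intervalIntegral.integral_of_le (by positivity : (0:ℝ) ≤ π/2)]
      exact integral_term n
    · intro x hx
      have hsx : 0 ≤ sin x := Real.sin_nonneg_of_nonneg_of_le_pi hx.1.le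
        (le_trans hx.2 (by linarith [Real.pi_pos]))
      have hW := (W_pos n).le
      simp only []
      rw [Real.norm_eq_abs, abs_of_nonneg (by positivity)]
  have key := hasSum_integral_of_summable_integral_norm (μ := volume.restrict (Ioc 0 (π/2)))
    (F := fun n (x : ℝ) => W n * sin x ^ (2*n+1) / (2*(n:ℝ)+1)) hint ?_
  · have e : (fun n : ℕ => ∫ x in Ioc (0:ℝ) (π/2), W n * sin x ^ (2*n+1) / (2*(n:ℝ)+1))
        = fun n : ℕ => W n^2/(2*(n:ℝ)+1) := by
      funext n
      rw [← intervalIntegral.integral_of_le (by positivity : (0:ℝ) ≤ π/2)]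
      exact integral_term n
    rw [e] at key
    exact key
  · apply Summable.congr (summable_a) fun n => (hnorm n).symm

lemma intervalIntegral_hh_eq_FF :
    ∫ x in (0:ℝ)..(π/2), hh x = ∫ x in (0:ℝ)..(π/2), FF x := by
  apply intervalIntegral.integral_congr_ae
  have h0 : ∀ᵐ (x:ℝ), x ≠ π/2 := by
    rw [ae_iff]
    have := Real.volume_singleton (a := π/2)
    rw [← this]
    congr 1
    ext x
    simp
  filter_upwards [h0] with x hx hmem
  rw [uIoc_of_le (by positivity : (0:ℝ) ≤ π/2)] at hmem
  exact hh_eq_FF hmem.1.le (lt_of_le_of_ne hmem.2 hx)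

lemma FF_integral_by_parts :
    ∫ x in (0:ℝ)..(π/2), FF x = ∫ x in (0:ℝ)..(π/2), (π/2 - x) * kf x := by
  have hpi : (0:ℝ) ≤ π/2 := by positivity
  have h := intervalIntegral.integral_mul_deriv_eq_deriv_mul (a := 0) (b := π/2)
    (u := FF) (u' := kf) (v := fun x => x - π/2) (v' := fun _ => (1:ℝ))
    (fun x hx => by
      rw [uIcc_of_le hpi] at hx
      exact hasDerivAt_FF hx.1 hx.2)
    (fun x _ => (hasDerivAt_id x).sub_const (π/2))
    (kf_intble hpi le_rfl)
    (intervalIntegrable_const)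
  have hFF0 : FF 0 = 0 := intervalIntegral.integral_same
  simp only [mul_one, sub_self, mul_zero, hFF0, zero_mul, zero_sub, zero_mul] at h
  rw [h]
  rw [← intervalIntegral.integral_neg]
  apply intervalIntegral.integral_congr
  intro x _
  simp only []
  ring

lemma sum_a_eq_J : ∑' n : ℕ, W n^2/(2*(n:ℝ)+1) = ∫ x in (0:ℝ)..(π/2), (π/2 - x) * kf x := by
  rw [hasSum_S.tsum_eq, ← intervalIntegral.integral_of_le (by positivity : (0:ℝ) ≤ π/2),
    intervalIntegral_hh_eq_FF, FF_integral_by_parts]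

lemma cos_nat_pi (j : ℕ) : cos ((j:ℝ)*π) = (-1)^j := by
  induction j with
  | zero => simp
  | succ j ih =>
    have : ((j:ℝ)+1)*π = (j:ℝ)*π + π := by ring
    push_cast
    rw [this, Real.cos_add_pi, ih]
    ring

lemma cos_odd_half (j : ℕ) : cos ((2*(j:ℝ)+1)*(π/2)) = 0 := by
  have : (2*(j:ℝ)+1)*(π/2) = (j:ℝ)*π + π/2 := by ring
  rw [this, Real.cos_add, Real.cos_pi_div_two, Real.sin_pi_div_two, Real.sin_nat_mul_pi]
  ring

lemma sin_odd_half (j : ℕ) : sin ((2*(j:ℝ)+1)*(π/2)) = (-1)^j := by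
  have : (2*(j:ℝ)+1)*(π/2) = (j:ℝ)*π + π/2 := by ring
  rw [this, Real.sin_add, Real.cos_pi_div_two, Real.sin_pi_div_two, Real.sin_nat_mul_pi,
    cos_nat_pi]
  ring

lemma dirichlet (m : ℕ) (x : ℝ) :
    2 * sin x * (∑ j ∈ Finset.range m, sin ((2*(j:ℝ)+1)*x)) + cos (2*(m:ℝ)*x) = 1 := by
  induction m with
  | zero => simp
  | succ m ih =>
    rw [Finset.sum_range_succ]
    have hc := Real.cos_sub_cos (2*(m:ℝ)*x) (2*((m:ℝ)+1)*x)
    have h1 : (2*(m:ℝ)*x + 2*((m:ℝ)+1)*x)/2 = (2*(m:ℝ)+1)*x := by ring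
    have h2 : (2*(m:ℝ)*x - 2*((m:ℝ)+1)*x)/2 = -x := by ring
    rw [h1, h2, Real.sin_neg] at hc
    push_cast
    linear_combination ih - hc

lemma phi_decomp (m : ℕ) {x : ℝ} (hx : x ∈ Icc (0:ℝ) (π/2)) :
    (π/2 - x) * kf x = 2*x*(π/2 - x) * (∑ j ∈ Finset.range m, sin ((2*(j:ℝ)+1)*x))
      + (π/2 - x) * kf x * cos (2*(m:ℝ)*x) := by
  rcases eq_or_lt_of_le hx.1 with h | h
  · subst h
    simp [kf]
  · have hs : 0 < sin x := Real.sin_pos_of_pos_of_lt_pi h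
      (lt_of_le_of_lt hx.2 (by linarith [Real.pi_pos]))
    rw [kf, if_neg (ne_of_gt h)]
    have hd := dirichlet m x
    rw [show cos (2*(m:ℝ)*x) = 1 - 2*sin x*(∑ j ∈ Finset.range m, sin ((2*(j:ℝ)+1)*x)) from by
      linarith [hd]]
    field_simp
    ring

lemma integral_Ej (j : ℕ) : ∫ x in (0:ℝ)..(π/2), 2*x*(π/2-x) * sin ((2*(j:ℝ)+1)*x)
    = -π*((-1)^j/(2*(j:ℝ)+1)^2) + 4*(1/(2*(j:ℝ)+1)^3) := by
  set c : ℝ := 2*(j:ℝ)+1 with hcdef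
  have hc : 0 < c := by rw [hcdef]; positivity
  have hder : ∀ x : ℝ, HasDerivAt (fun y => -2*((π/2)*y - y^2) * cos (c*y) / c
      + 2*(π/2 - 2*y) * sin (c*y) / c^2 - 4 * cos (c*y) / c^3)
      (2*x*(π/2-x) * sin (c*x)) x := by
    intro x
    have hid : HasDerivAt (fun y : ℝ => c * y) c x := by
      simpa using (hasDerivAt_id x).const_mul c
    have hsin : HasDerivAt (fun y => sin (c*y)) (cos (c*x) * c) x :=
      (Real.hasDerivAt_sin (c*x)).comp x hid
    have hcos : HasDerivAt (fun y => cos (c*y)) (-sin (c*x) * c) x :=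
      (Real.hasDerivAt_cos (c*x)).comp x hid
    have hb : HasDerivAt (fun y : ℝ => y^2) (2*x) x := by
      simpa using (hasDerivAt_pow 2 x)
    have ha : HasDerivAt (fun y : ℝ => (π/2)*y) (π/2) x := by
      simpa using (hasDerivAt_id x).const_mul (π/2)
    have hp1 : HasDerivAt (fun y : ℝ => -2*((π/2)*y - y^2)) (-2*(π/2 - 2*x)) x :=
      (ha.sub hb).const_mul (-2)
    have hp2 : HasDerivAt (fun y : ℝ => 2*(π/2 - 2*y)) (-4) x := by
      have h4 : HasDerivAt (fun y : ℝ => π/2 - 2*y) (-2) x := by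
        simpa using ((hasDerivAt_id x).const_mul 2).const_sub (π/2)
      have := h4.const_mul 2
      exact this.congr_deriv (by norm_num)
    have t1 := (hp1.mul hcos).div_const c
    have t2 := (hp2.mul hsin).div_const (c^2)
    have t3 := (hcos.const_mul 4).div_const (c^3)
    have total := (t1.add t2).sub t3
    refine total.congr_deriv (Eq.symm ?_)
    field_simp
    ring
  have hcont : Continuous (fun x : ℝ => 2*x*(π/2-x) * sin (c*x)) := by
    continuity
  rw [intervalIntegral.integral_eq_sub_of_hasDerivAt (fun x _ => hder x)
    (hcont.intervalIntegrable _ _)]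
  have e1 : c*(π/2) = (2*(j:ℝ)+1)*(π/2) := by rw [hcdef]
  rw [e1, cos_odd_half, sin_odd_half]
  simp only [mul_zero, Real.cos_zero, Real.sin_zero]
  rw [hcdef]
  have hcc : (2*(j:ℝ)+1) ≠ 0 := by positivity
  field_simp
  ring

lemma phi_cont : ContinuousOn (fun x : ℝ => (π/2 - x) * kf x) (Icc 0 (π/2)) :=
  (continuous_const.sub continuous_id).continuousOn.mul kf_contOn

lemma phi_intble : IntervalIntegrable (fun x : ℝ => (π/2 - x) * kf x) volume 0 (π/2) := by
  apply ContinuousOn.intervalIntegrable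
  rw [uIcc_of_le (by positivity : (0:ℝ) ≤ π/2)]
  exact phi_cont

lemma phi_cos_intble (m : ℕ) :
    IntervalIntegrable (fun x : ℝ => (π/2 - x) * kf x * cos (2*(m:ℝ)*x)) volume 0 (π/2) := by
  apply ContinuousOn.intervalIntegrable
  rw [uIcc_of_le (by positivity : (0:ℝ) ≤ π/2)]
  exact phi_cont.mul (Real.continuous_cos.comp (continuous_const.mul continuous_id)).continuousOn

lemma J_decomp (m : ℕ) :
    ∫ x in (0:ℝ)..(π/2), (π/2 - x) * kf x
      = (∑ j ∈ Finset.range m, ∫ x in (0:ℝ)..(π/2), 2*x*(π/2-x) * sin ((2*(j:ℝ)+1)*x))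
        + ∫ x in (0:ℝ)..(π/2), (π/2 - x) * kf x * cos (2*(m:ℝ)*x) := by
  have hintj : ∀ j ∈ Finset.range m,
      IntervalIntegrable (fun x : ℝ => 2*x*(π/2-x) * sin ((2*(j:ℝ)+1)*x)) volume 0 (π/2) := by
    intro j _
    apply Continuous.intervalIntegrable
    continuity
  have hsumint : IntervalIntegrable
      (fun x : ℝ => ∑ j ∈ Finset.range m, 2*x*(π/2-x) * sin ((2*(j:ℝ)+1)*x)) volume 0 (π/2) := by
    have h := IntervalIntegrable.sum (Finset.range m) hintj
    rw [Finset.sum_fn] at h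
    exact h
  rw [← intervalIntegral.integral_finset_sum hintj,
    ← intervalIntegral.integral_add hsumint (phi_cos_intble m)]
  apply intervalIntegral.integral_congr
  intro x hx
  rw [uIcc_of_le (by positivity : (0:ℝ) ≤ π/2)] at hx
  have h2 := phi_decomp m hx
  rw [Finset.mul_sum] at h2
  simp only []
  linarith [h2]

lemma summable_K : Summable (fun j : ℕ => ((-1:ℝ))^j/(2*(j:ℝ)+1)^2) := by
  apply Summable.of_abs
  apply Summable.of_nonneg_of_le (fun n => abs_nonneg _) _ summable_inv_sq
  intro n
  rw [abs_div, abs_pow, abs_neg, abs_one, one_pow, abs_of_pos (by positivity : (0:ℝ) < (2*(n:ℝ)+1)^2)]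
  apply one_div_le_one_div_of_le (by positivity)
  apply pow_le_pow_left₀ (by positivity)
  linarith [Nat.cast_nonneg (α := ℝ) n]

lemma summable_inv_cube : Summable (fun m : ℕ => 1/((m:ℝ)+1)^3) := by
  have h : Summable (fun n : ℕ => 1/((n:ℝ))^3) := Real.summable_one_div_nat_pow.mpr (by norm_num)
  have := (summable_nat_add_iff 1).2 h
  refine this.congr fun n => ?_
  push_cast
  ring

lemma summable_odd_cube : Summable (fun j : ℕ => 1/(2*(j:ℝ)+1)^3) := by
  apply Summable.of_nonneg_of_le (fun n => by positivity) _ summable_inv_cube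
  intro n
  apply one_div_le_one_div_of_le (by positivity)
  have h1 : ((n:ℝ)+1) ≤ 2*(n:ℝ)+1 := by linarith [Nat.cast_nonneg (α := ℝ) n]
  calc ((n:ℝ)+1)^3 ≤ (2*(n:ℝ)+1)^3 := by
        apply pow_le_pow_left₀ (by positivity) h1
  _ = (2*(n:ℝ)+1)^3 := rfl

lemma odd_cubes : ∑' j : ℕ, 1/(2*(j:ℝ)+1)^3 = 7/8 * ∑' m : ℕ, 1/((m:ℝ)+1)^3 := by
  set z := ∑' m : ℕ, 1/((m:ℝ)+1)^3 with hz
  have hs := summable_inv_cube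
  have hinj2 : Function.Injective (fun k : ℕ => 2*k) := fun a b h => by dsimp at h; omega
  have heven : Summable (fun k : ℕ => 1/(((2*k : ℕ):ℝ)+1)^3) := hs.comp_injective hinj2
  have hinj3 : Function.Injective (fun k : ℕ => 2*k+1) := fun a b h => by dsimp at h; omega
  have hodd : Summable (fun k : ℕ => 1/(((2*k+1 : ℕ):ℝ)+1)^3) := hs.comp_injective hinj3
  have key := tsum_even_add_odd (f := fun m : ℕ => 1/((m:ℝ)+1)^3) heven hodd
  have e1 : ∑' k : ℕ, 1/(((2*k:ℕ):ℝ)+1)^3 = ∑' j : ℕ, 1/(2*(j:ℝ)+1)^3 := by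
    apply tsum_congr
    intro k
    push_cast
    ring_nf
  have e2 : ∑' k : ℕ, 1/(((2*k+1:ℕ):ℝ)+1)^3 = (1/8) * z := by
    rw [hz, ← tsum_mul_left]
    apply tsum_congr
    intro k
    push_cast
    field_simp
    ring
  rw [e1, e2] at key
  linarith [key]

noncomputable def phiR : ℝ → ℝ := Set.indicator (Ioc 0 (π/2)) (fun x => (π/2 - x) * kf x)
noncomputable def phiC : ℝ → ℂ := fun x => ((phiR x : ℝ) : ℂ)

lemma phiR_integrable : Integrable phiR volume := by
  unfold phiR
  rw [MeasureTheory.integrable_indicator_iff measurableSet_Ioc]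
  exact (phi_cont.integrableOn_Icc).mono_set Ioc_subset_Icc_self

lemma phiC_integrable : Integrable phiC volume := phiR_integrable.ofReal

lemma Rm_eq (m : ℕ) : ∫ x in (0:ℝ)..(π/2), (π/2 - x) * kf x * cos (2*(m:ℝ)*x)
    = (∫ v : ℝ, Real.fourierChar (-(v * ((m:ℝ)/π))) • phiC v).re := by
  have hmeas : AEStronglyMeasurable (fun v : ℝ => Real.fourierChar (-(v * ((m:ℝ)/π))) • phiC v)
      volume := by
    apply AEStronglyMeasurable.smul
    · apply Continuous.aestronglyMeasurable
      exact continuous_subtype_val.comp (Real.continuous_fourierChar.comp (continuous_id.mul continuous_const).neg)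
    · exact phiC_integrable.aestronglyMeasurable
  have hint : Integrable (fun v : ℝ => Real.fourierChar (-(v * ((m:ℝ)/π))) • phiC v) volume := by
    apply Integrable.mono' phiC_integrable.norm hmeas
    filter_upwards with v
    rw [Circle.smul_def, smul_eq_mul, norm_mul]
    rw [Circle.norm_coe, one_mul]
  conv_rhs => rw [← Complex.reCLM_apply]
  rw [← ContinuousLinearMap.integral_comp_comm Complex.reCLM hint]
  have hre : ∀ v : ℝ, Complex.reCLM (Real.fourierChar (-(v * ((m:ℝ)/π))) • phiC v)
      = Set.indicator (Ioc 0 (π/2)) (fun x => (π/2 - x) * kf x * cos (2*(m:ℝ)*x)) v := by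
    intro v
    have hpi : (π:ℝ) ≠ 0 := Real.pi_ne_zero
    have e0 : (2 * π * (-(v * ((m:ℝ)/π)))) = -(2*(m:ℝ)*v) := by field_simp
    have e1 : (Real.fourierChar (-(v * ((m:ℝ)/π))) : ℂ)
        = Complex.exp (Complex.I * (-(2*(m:ℝ)*v) : ℝ)) := by
      rw [Real.fourierChar_apply, e0, mul_comm]
    rw [Circle.smul_def, smul_eq_mul, e1]
    simp only [Complex.reCLM_apply, Complex.mul_re]
    unfold phiC
    rw [Complex.ofReal_re, Complex.ofReal_im, mul_zero, sub_zero]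
    rw [mul_comm Complex.I _, Complex.exp_ofReal_mul_I_re, Real.cos_neg]
    unfold phiR
    by_cases hv : v ∈ Ioc (0:ℝ) (π/2)
    · rw [Set.indicator_of_mem hv, Set.indicator_of_mem hv]
      ring
    · rw [Set.indicator_of_notMem hv, Set.indicator_of_notMem hv, mul_zero]
  rw [integral_congr_ae (Filter.Eventually.of_forall hre)]
  rw [MeasureTheory.integral_indicator measurableSet_Ioc]
  rw [← intervalIntegral.integral_of_le (by positivity : (0:ℝ) ≤ π/2)]

lemma tendsto_R : Tendsto (fun m : ℕ => ∫ x in (0:ℝ)..(π/2), (π/2 - x) * kf x * cos (2*(m:ℝ)*x))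
    atTop (𝓝 0) := by
  have h1 := Real.tendsto_integral_exp_smul_cocompact phiC
  have h2 : Tendsto (fun m : ℕ => (m:ℝ)/π) atTop (Filter.cocompact ℝ) := by
    have ha : Tendsto (fun m : ℕ => (m:ℝ)/π) atTop atTop :=
      tendsto_natCast_atTop_atTop.atTop_div_const Real.pi_pos
    apply ha.mono_right
    rw [cocompact_eq_atBot_atTop]
    exact le_sup_right
  have h3 := h1.comp h2
  have h4 := (Complex.continuous_re.tendsto 0).comp h3
  simp only [Complex.zero_re] at h4
  refine h4.congr fun m => ?_
  exact (Rm_eq m).symm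

lemma hasSum_E : HasSum (fun j : ℕ => -π*((-1:ℝ)^j/(2*(j:ℝ)+1)^2) + 4*(1/(2*(j:ℝ)+1)^3))
    (-π * catalanK + (7/2) * ∑' m : ℕ, 1/((m:ℝ)+1)^3) := by
  have hK : HasSum (fun j : ℕ => ((-1:ℝ))^j/(2*(j:ℝ)+1)^2) catalanK := summable_K.hasSum
  have hO : HasSum (fun j : ℕ => 1/(2*(j:ℝ)+1)^3) ((7/8) * ∑' m : ℕ, 1/((m:ℝ)+1)^3) := by
    have h := summable_odd_cube.hasSum
    rwa [odd_cubes] at h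
  have combo := (hK.mul_left (-π)).add (hO.mul_left 4)
  rw [show (7/2:ℝ) * ∑' m : ℕ, 1/((m:ℝ)+1)^3 = 4 * ((7/8) * ∑' m : ℕ, 1/((m:ℝ)+1)^3) by ring]
  exact combo

lemma J_val : ∫ x in (0:ℝ)..(π/2), (π/2 - x) * kf x
    = -π * catalanK + (7/2) * ∑' m : ℕ, 1/((m:ℝ)+1)^3 := by
  have hpartial := hasSum_E.tendsto_sum_nat
  have h5 := hpartial.add tendsto_R
  rw [add_zero] at h5
  have h6 : (fun m : ℕ => (∑ j ∈ Finset.range m, (-π*((-1:ℝ)^j/(2*(j:ℝ)+1)^2) + 4*(1/(2*(j:ℝ)+1)^3)))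
      + ∫ x in (0:ℝ)..(π/2), (π/2 - x) * kf x * cos (2*(m:ℝ)*x))
      = fun _ : ℕ => ∫ x in (0:ℝ)..(π/2), (π/2 - x) * kf x := by
    funext m
    rw [← Finset.sum_congr rfl (fun j _ => integral_Ej j)]
    exact (J_decomp m).symm
  rw [h6] at h5
  exact tendsto_nhds_unique tendsto_const_nhds h5

lemma a_eq (n : ℕ) : (16:ℝ)^n / ((2*(n:ℝ)+1)^3 * (Nat.centralBinom n : ℝ)^2)
    = W n^2/(2*(n:ℝ)+1) := by
  have hC : (Nat.centralBinom n : ℝ) ≠ 0 := by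
    exact_mod_cast (Nat.centralBinom_pos n).ne'
  have h1 : (2*(n:ℝ)+1) ≠ 0 := by positivity
  have h16 : (16:ℝ)^n = 4^n * 4^n := by rw [← mul_pow]; norm_num
  rw [W_formula, div_pow, h16]
  field_simp

theorem stmt_18 :
    ∑' n : ℕ, (16 : ℝ) ^ n / ((2 * (n : ℝ) + 1) ^ 3 * (Nat.centralBinom n : ℝ) ^ 2) =
      -Real.pi * catalanK + (7 / 2) * ∑' m : ℕ, (1 : ℝ) / (m + 1) ^ 3 := by
  rw [tsum_congr a_eq, sum_a_eq_J, J_val]
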